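/- Let Γ₁ and Γ₂ be subgroups of SL(2, ℂ), and suppose there exists g ∈ GL(2, ℂ) such that the intersection Γ₁ ∩ gΓ₂g⁻¹ has finite index both in Γ₁ and in gΓ₂g⁻¹. Then every element of Γ₁ has trace an algebraic integer if and only if every element of Γ₂ has trace an algebraic integer. -/

import Mathlib

/-!
For `γ ∈ SL(2)` the Cayley–Hamilton relation `γ² = (tr γ) γ - 1` gives the recursion
`tr γⁿ⁺² = tr γ · tr γⁿ⁺¹ - tr γⁿ`, so `tr γⁿ = Dₙ(tr γ)` for the Dickson polynomial
`Dₙ = dickson 1 1 n`, which is monic of degree `n` with integer coefficients. Hence `tr γ` is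
integral as soon as `tr γⁿ` is. Every element of a group has a positive power in any subgroup of
finite index, so integral traces pass from a finite-index subgroup to the whole group, and
conjugation by `g` does not change traces.
-/

open Matrix Polynomial

namespace Polynomial

variable {R : Type*} [CommRing R]

theorem natDegree_dickson_le (k : ℕ) (a : R) (n : ℕ) : (dickson k a n).natDegree ≤ n := by
  induction n using Nat.twoStepInduction with
  | zero => simpa [dickson_zero] using natDegree_sub_le (3 : R[X]) (k : R[X])
  | one => simpa only [dickson_one] using natDegree_X_le
  | more n ih₀ ih₁ =>
    rw [dickson_add_two]
    refine (natDegree_sub_le _ _).trans (max_le ?_ ?_)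
    · exact natDegree_mul_le.trans (by linarith [natDegree_X_le (R := R)])
    · exact (natDegree_C_mul_le _ _).trans (by omega)

theorem dickson_monic_and_natDegree [Nontrivial R] (k : ℕ) (a : R) {n : ℕ} (hn : 0 < n) :
    (dickson k a n).Monic ∧ (dickson k a n).natDegree = n := by
  induction n using Nat.twoStepInduction with
  | zero => omega
  | one => simpa only [dickson_one] using ⟨monic_X, natDegree_X⟩
  | more n _ ih₁ =>
    obtain ⟨hmonic, hdeg⟩ := ih₁ n.succ_pos
    have hXmonic : (X * dickson k a (n + 1)).Monic := monic_X.mul hmonic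
    have hXdeg : (X * dickson k a (n + 1)).natDegree = n + 2 := by
      rw [monic_X.natDegree_mul hmonic, natDegree_X, hdeg]; ring
    have hlt : (C a * dickson k a n).natDegree < (X * dickson k a (n + 1)).natDegree :=
      hXdeg ▸ (natDegree_C_mul_le _ _).trans_lt ((natDegree_dickson_le k a n).trans_lt (by omega))
    rw [dickson_add_two]
    exact ⟨hXmonic.sub_of_left (degree_lt_degree hlt),
      (natDegree_sub_eq_left_of_natDegree_lt hlt).trans hXdeg⟩

end Polynomial

namespace Matrix

variable {B : Type*} [CommRing B]

theorem sq_fin_two_eq_trace_smul_sub_det_smul (A : Matrix (Fin 2) (Fin 2) B) :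
    A ^ 2 = A.trace • A - A.det • 1 := by
  ext i j
  fin_cases i <;> fin_cases j <;> simp [sq, mul_apply, trace_fin_two, det_fin_two] <;> ring

theorem trace_pow_eq_eval_dickson {A : Matrix (Fin 2) (Fin 2) B} (hA : A.det = 1) (n : ℕ) :
    (A ^ n).trace = (dickson 1 (1 : B) n).eval A.trace := by
  induction n using Nat.twoStepInduction with
  | zero => norm_num [dickson_zero]
  | one => simp [dickson_one]
  | more n ih₀ ih₁ =>
    have hpow : A ^ (n + 2) = A.trace • A ^ (n + 1) - A ^ n := by
      rw [pow_add, sq_fin_two_eq_trace_smul_sub_det_smul, hA, one_smul, Matrix.mul_sub,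
        Matrix.mul_smul, mul_one, ← pow_succ]
    rw [hpow, trace_sub, trace_smul, ih₀, ih₁, dickson_add_two]
    simp

theorem isIntegral_trace_of_isIntegral_trace_pow {R : Type*} [CommRing R] [Nontrivial R]
    [Algebra R B] {A : Matrix (Fin 2) (Fin 2) B} (hA : A.det = 1) {n : ℕ} (hn : 0 < n)
    (h : IsIntegral R (A ^ n).trace) : IsIntegral R A.trace := by
  obtain ⟨hmonic, hdeg⟩ := dickson_monic_and_natDegree 1 (1 : R) hn
  refine .of_aeval_monic hmonic (by omega) ?_
  rwa [aeval_def, eval₂_eq_eval_map, map_dickson, map_one, ← trace_pow_eq_eval_dickson hA]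

end Matrix

section IntegralTraces

variable (R : Type*) {n B : Type*} [Fintype n] [DecidableEq n] [CommRing R] [CommRing B]
  [Algebra R B]

def HasIntegralTraces (Γ : Subgroup (SpecialLinearGroup n B)) : Prop :=
  ∀ γ ∈ Γ, IsIntegral R (γ : Matrix n n B).trace

variable {R}

theorem HasIntegralTraces.anti {Γ Δ : Subgroup (SpecialLinearGroup n B)}
    (hΓ : HasIntegralTraces R Γ) (hΔ : Δ ≤ Γ) : HasIntegralTraces R Δ :=
  fun γ hγ => hΓ γ (hΔ hγ)

theorem HasIntegralTraces.of_relIndex_ne_zero [Nontrivial R]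
    {Γ Δ : Subgroup (SpecialLinearGroup (Fin 2) B)} (hΔ : HasIntegralTraces R Δ)
    (hindex : Δ.relIndex Γ ≠ 0) : HasIntegralTraces R Γ := by
  intro γ hγ
  obtain ⟨k, hk, -, hmem⟩ := Subgroup.exists_pow_mem_of_relIndex_ne_zero hindex hγ
  exact isIntegral_trace_of_isIntegral_trace_pow γ.2 hk (by simpa using hΔ _ hmem.1)

theorem hasIntegralTraces_iff_of_relIndex_ne_zero [Nontrivial R]
    {Γ Γ' : Subgroup (SpecialLinearGroup (Fin 2) B)} (h : (Γ ⊓ Γ').relIndex Γ ≠ 0)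
    (h' : (Γ ⊓ Γ').relIndex Γ' ≠ 0) : HasIntegralTraces R Γ ↔ HasIntegralTraces R Γ' :=
  ⟨fun hΓ => (hΓ.anti inf_le_left).of_relIndex_ne_zero h',
    fun hΓ' => (hΓ'.anti inf_le_right).of_relIndex_ne_zero h⟩

theorem hasIntegralTraces_iff_of_forall_mem_iff_conj {Γ Γ' : Subgroup (SpecialLinearGroup n B)}
    (g : GL n B) (hΓ' : ∀ x : SpecialLinearGroup n B,
      x ∈ Γ' ↔ ∃ y ∈ Γ, (x : Matrix n n B) = g * (y : Matrix n n B) * (g⁻¹ : GL n B)) :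
    HasIntegralTraces R Γ' ↔ HasIntegralTraces R Γ := by
  constructor
  · intro h y hy
    let x : SpecialLinearGroup n B := ⟨g * (y : Matrix n n B) * (g⁻¹ : GL n B), by
      rw [det_units_conj, y.2]⟩
    simpa only [x, trace_units_conj] using h x ((hΓ' x).2 ⟨y, hy, rfl⟩)
  · intro h x hx
    obtain ⟨y, hy, hxy⟩ := (hΓ' x).1 hx
    simpa only [hxy, trace_units_conj] using h y hy

end IntegralTraces

/-- Let `Γ₁, Γ₂ ≤ SL(2, ℂ)` and suppose there exists `g ∈ GL(2, ℂ)` such that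
`Γ₁ ∩ gΓ₂g⁻¹` has finite index both in `Γ₁` and in `gΓ₂g⁻¹`. Then every element
of `Γ₁` has algebraic-integer trace iff every element of `Γ₂` does. -/
theorem stmt_5 (Γ₁ Γ₂ : Subgroup (Matrix.SpecialLinearGroup (Fin 2) ℂ))
    (g : GL (Fin 2) ℂ)
    (Γ₂' : Subgroup (Matrix.SpecialLinearGroup (Fin 2) ℂ))
    (hΓ₂' : ∀ x : Matrix.SpecialLinearGroup (Fin 2) ℂ,
      x ∈ Γ₂' ↔ ∃ y ∈ Γ₂,
        (x : Matrix (Fin 2) (Fin 2) ℂ) =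
          (g : Matrix (Fin 2) (Fin 2) ℂ) * (y : Matrix (Fin 2) (Fin 2) ℂ) *
            ((g⁻¹ : GL (Fin 2) ℂ) : Matrix (Fin 2) (Fin 2) ℂ))
    (hfin₁ : (Γ₁ ⊓ Γ₂').relIndex Γ₁ ≠ 0)
    (hfin₂ : (Γ₁ ⊓ Γ₂').relIndex Γ₂' ≠ 0) :
    (∀ γ ∈ Γ₁, IsIntegral ℤ (Matrix.trace (γ : Matrix (Fin 2) (Fin 2) ℂ))) ↔
      (∀ γ ∈ Γ₂, IsIntegral ℤ (Matrix.trace (γ : Matrix (Fin 2) (Fin 2) ℂ))) :=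
  (hasIntegralTraces_iff_of_relIndex_ne_zero hfin₁ hfin₂).trans
    (hasIntegralTraces_iff_of_forall_mem_iff_conj g hΓ₂')
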